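/- arXiv:2409.04362 — 4 statements merged into one kernel-verified Lean document; each statement's English description precedes it below -/
import Mathlib

section
/- Let f[z₁,z₂,z₃] = [iz₁,iz₂,-z₃] and κ'[z₁,z₂,z₃] = [z̄₁,z̄₂,z̄₃] on T^6 = (ℂ/(ℤ+ℤi))³. Then the fixed point set of f⁻¹∘κ' is exactly the set of points [x₁ - ix₁, x₂ - ix₂, ε₃ + iy₃] with ε₃ ∈ {0, 1/2} and x₁, x₂, y₃ ∈ ℝ; in particular it is a disjoint union of two 3-tori. -/
noncomputable section

open Complex

/-- The Gaussian lattice Γ = ℤ⟨1, i⟩ in ℂ. -/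
def GammaLat : AddSubgroup ℂ := AddSubgroup.closure {1, Complex.I}

/-- The complex torus ℂ/Γ. -/
abbrev CTorus := ℂ ⧸ GammaLat

/-- T⁶ = (ℂ/Γ)³. -/
abbrev T6 := Fin 3 → CTorus

/-- The projection ℂ³ → T⁶. -/
def pr6 : (Fin 3 → ℂ) → T6 := fun z i => QuotientAddGroup.mk (z i)

/-- The lift of f to ℂ³ : (z₁,z₂,z₃) ↦ (iz₁, iz₂, -z₃). -/
def fC : (Fin 3 → ℂ) → (Fin 3 → ℂ) := fun z => ![Complex.I * z 0, Complex.I * z 1, -(z 2)]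

/-- The lift of f⁻¹∘κ' to ℂ³ : z ↦ (-i z̄₁, -i z̄₂, -z̄₃). -/
def finvKappaC : (Fin 3 → ℂ) → (Fin 3 → ℂ) := fun z =>
  ![-Complex.I * (starRingEnd ℂ) (z 0), -Complex.I * (starRingEnd ℂ) (z 1),
    -(starRingEnd ℂ) (z 2)]

/-! Everything is coordinatewise modulo `Γ = ℤ + ℤi`. For `z = a + bi`, `-i z̄ ≡ z` says
`a + b ∈ ℤ`, i.e. `z ≡ a - ia`; and `-z̄ ≡ z` says `2a ∈ ℤ`, i.e. `z ≡ ε + ib` with `ε ∈ {0, 1/2}`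
according to the parity of `2a`. The two pieces are disjoint because `1/2 ∉ ℤ`. -/

open ComplexConjugate

lemma mem_gammaLat_iff (w : ℂ) :
    w ∈ GammaLat ↔ (∃ m : ℤ, w.re = m) ∧ ∃ n : ℤ, w.im = n := by
  constructor
  · intro h
    induction h using AddSubgroup.closure_induction with
    | mem x hx =>
      rcases hx with rfl | rfl
      · exact ⟨⟨1, by simp⟩, ⟨0, by simp⟩⟩
      · exact ⟨⟨0, by simp⟩, ⟨1, by simp⟩⟩
    | zero => exact ⟨⟨0, by simp⟩, ⟨0, by simp⟩⟩
    | add a b _ _ ha hb =>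
      obtain ⟨⟨m, hm⟩, ⟨n, hn⟩⟩ := ha
      obtain ⟨⟨m', hm'⟩, ⟨n', hn'⟩⟩ := hb
      exact ⟨⟨m + m', by simp [hm, hm']⟩, ⟨n + n', by simp [hn, hn']⟩⟩
    | neg a _ ha =>
      obtain ⟨⟨m, hm⟩, ⟨n, hn⟩⟩ := ha
      exact ⟨⟨-m, by simp [hm]⟩, ⟨-n, by simp [hn]⟩⟩
  · rintro ⟨⟨m, hm⟩, ⟨n, hn⟩⟩
    have h1 : (1 : ℂ) ∈ GammaLat := AddSubgroup.subset_closure (by simp)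
    have hI : I ∈ GammaLat := AddSubgroup.subset_closure (by simp)
    have hw : w = m • (1 : ℂ) + n • I := by
      apply Complex.ext <;> simp [hm, hn]
    exact hw ▸ add_mem (zsmul_mem h1 m) (zsmul_mem hI n)

lemma coe_eq_coe_iff (a b : ℂ) :
    (a : CTorus) = b ↔ (∃ m : ℤ, a.re - b.re = m) ∧ ∃ n : ℤ, a.im - b.im = n := by
  rw [QuotientAddGroup.eq_iff_sub_mem, mem_gammaLat_iff, sub_re, sub_im]

lemma pr6_surjective : Function.Surjective pr6 :=
  Function.Surjective.piMap fun _ => QuotientAddGroup.mk_surjective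

lemma coe_neg_I_mul_conj_eq_iff (z : ℂ) :
    ((-I * conj z : ℂ) : CTorus) = z ↔ ∃ x : ℝ, (z : CTorus) = (x - x * I : ℂ) := by
  simp only [coe_eq_coe_iff, mul_re, mul_im, neg_re, neg_im, conj_re, conj_im, I_re, I_im,
    sub_re, sub_im, ofReal_re, ofReal_im, mul_zero, mul_one, sub_zero, zero_sub, add_zero]
  constructor
  · rintro ⟨-, n, hn⟩
    exact ⟨z.re, ⟨0, by simp⟩, ⟨-n, by push_cast; linarith⟩⟩
  · rintro ⟨x, ⟨m, hm⟩, ⟨n, hn⟩⟩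
    exact ⟨⟨-(m + n), by push_cast; linarith⟩, ⟨-(m + n), by push_cast; linarith⟩⟩

lemma coe_neg_conj_eq_iff (z : ℂ) :
    ((-conj z : ℂ) : CTorus) = z ↔
      ∃ ε y : ℝ, (ε = 0 ∨ ε = 1 / 2) ∧ (z : CTorus) = (ε + y * I : ℂ) := by
  simp only [coe_eq_coe_iff, neg_re, neg_im, conj_re, conj_im, add_re, add_im, mul_re, mul_im,
    I_re, I_im, ofReal_re, ofReal_im, mul_zero, mul_one, sub_zero, add_zero]
  constructor
  · rintro ⟨⟨m, hm⟩, -⟩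
    rcases Int.even_or_odd' m with ⟨k, rfl | rfl⟩
    · exact ⟨0, z.im, Or.inl rfl, ⟨-k, by push_cast at hm ⊢; linarith⟩, ⟨0, by simp⟩⟩
    · exact ⟨1 / 2, z.im, Or.inr rfl, ⟨-k - 1, by push_cast at hm ⊢; linarith⟩, ⟨0, by simp⟩⟩
  · rintro ⟨ε, y, hε, ⟨m, hm⟩, -⟩
    rcases hε with rfl | rfl
    · exact ⟨⟨-2 * m, by push_cast; linarith⟩, ⟨0, by simp⟩⟩
    · exact ⟨⟨-2 * m - 1, by push_cast; linarith⟩, ⟨0, by simp⟩⟩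

lemma coe_I_mul_ne_coe_half_add_I_mul (y y' : ℝ) :
    ((y * I : ℂ) : CTorus) ≠ (1 / 2 + y' * I : ℂ) := by
  rw [Ne, coe_eq_coe_iff]
  rintro ⟨⟨m, hm⟩, -⟩
  have h2m : ((-2 * m : ℤ) : ℝ) = 1 := by
    norm_num at hm
    push_cast; linarith
  have : -2 * m = 1 := by exact_mod_cast h2m
  omega

/-- The fixed point set of f⁻¹∘κ' on T⁶ is exactly the set of points
[x₁ - ix₁, x₂ - ix₂, ε₃ + iy₃] with ε₃ ∈ {0, 1/2} and x₁, x₂, y₃ ∈ ℝ; moreover the two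
pieces (ε₃ = 0 and ε₃ = 1/2) are disjoint, so the fixed set is a disjoint union of two
3-tori. -/
theorem stmt2 (g : T6 → T6)
    (hg : ∀ z : Fin 3 → ℂ, g (pr6 z) = pr6 (finvKappaC z)) :
    ({p : T6 | g p = p} =
      {p : T6 | ∃ x₁ x₂ y₃ ε₃ : ℝ, (ε₃ = 0 ∨ ε₃ = 1/2) ∧
        p = pr6 ![(x₁ : ℂ) - (x₁ : ℂ) * Complex.I, (x₂ : ℂ) - (x₂ : ℂ) * Complex.I,
          (ε₃ : ℂ) + (y₃ : ℂ) * Complex.I]}) ∧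
    (∀ x₁ x₂ y₃ x₁' x₂' y₃' : ℝ,
      pr6 ![(x₁ : ℂ) - (x₁ : ℂ) * Complex.I, (x₂ : ℂ) - (x₂ : ℂ) * Complex.I,
        (y₃ : ℂ) * Complex.I] ≠
      pr6 ![(x₁' : ℂ) - (x₁' : ℂ) * Complex.I, (x₂' : ℂ) - (x₂' : ℂ) * Complex.I,
        (1/2 : ℂ) + (y₃' : ℂ) * Complex.I]) := by
  refine ⟨Set.ext fun p => ⟨fun hp => ?_, ?_⟩, fun _ _ y₃ _ _ y₃' h =>
    coe_I_mul_ne_coe_half_add_I_mul y₃ y₃' (congrFun h 2)⟩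
  · obtain ⟨z, rfl⟩ := pr6_surjective p
    rw [Set.mem_ofPred_eq, hg] at hp
    obtain ⟨x₁, h₁⟩ := (coe_neg_I_mul_conj_eq_iff (z 0)).1 (congrFun hp 0)
    obtain ⟨x₂, h₂⟩ := (coe_neg_I_mul_conj_eq_iff (z 1)).1 (congrFun hp 1)
    obtain ⟨ε₃, y₃, hε, h₃⟩ := (coe_neg_conj_eq_iff (z 2)).1 (congrFun hp 2)
    refine ⟨x₁, x₂, y₃, ε₃, hε, funext fun i => ?_⟩
    fin_cases i
    exacts [h₁, h₂, h₃]
  · rintro ⟨x₁, x₂, y₃, ε₃, hε, rfl⟩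
    rw [Set.mem_ofPred_eq, hg]
    funext i
    fin_cases i
    exacts [(coe_neg_I_mul_conj_eq_iff _).2 ⟨x₁, rfl⟩, (coe_neg_I_mul_conj_eq_iff _).2 ⟨x₂, rfl⟩,
      (coe_neg_conj_eq_iff _).2 ⟨ε₃, y₃, hε, rfl⟩]
end
end

section
/- On T^6 = (ℂ/(ℤ+ℤi))³, the maps g₁[z] = [iz̄₁, iz̄₂, -z̄₃ + i/2] and g₂[z] = [-iz̄₁, -iz̄₂, -z̄₃ + (1+i)/2] have no fixed points, because their action on the imaginary part of the third coordinate translates by 1/2. -/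
noncomputable section

open Complex

/-- The lift of g₁ = f⁻¹∘(κ∘ι₂)' to ℂ³ : z ↦ (i z̄₁, i z̄₂, -z̄₃ + i/2). -/
def g1C : (Fin 3 → ℂ) → (Fin 3 → ℂ) := fun z =>
  ![Complex.I * (starRingEnd ℂ) (z 0), Complex.I * (starRingEnd ℂ) (z 1),
    -(starRingEnd ℂ) (z 2) + Complex.I / 2]

/-- The lift of g₂ = f⁻¹∘(κ∘ι₁∘ι₂)' to ℂ³ : z ↦ (-i z̄₁, -i z̄₂, -z̄₃ + (1+i)/2). -/
def g2C : (Fin 3 → ℂ) → (Fin 3 → ℂ) := fun z =>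
  ![-Complex.I * (starRingEnd ℂ) (z 0), -Complex.I * (starRingEnd ℂ) (z 1),
    -(starRingEnd ℂ) (z 2) + (1 + Complex.I) / 2]

lemma im_int_of_mem_GammaLat {w : ℂ} (hw : w ∈ GammaLat) : ∃ m : ℤ, w.im = (m : ℝ) := by
  induction hw using AddSubgroup.closure_induction with
  | mem x hx =>
    rcases hx with h | h
    · exact ⟨0, by simp [h]⟩
    · exact ⟨1, by simp [Set.mem_singleton_iff.mp h]⟩
  | zero => exact ⟨0, by simp⟩
  | add x y _ _ hx hy =>
    obtain ⟨m, hm⟩ := hx; obtain ⟨n, hn⟩ := hy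
    exact ⟨m + n, by push_cast [Complex.add_im, hm, hn]; ring⟩
  | neg x _ hx =>
    obtain ⟨m, hm⟩ := hx
    exact ⟨-m, by push_cast [Complex.neg_im, hm]; ring⟩

lemma no_fix (g : T6 → T6) (c : ℂ) (hc : c.im = 1/2)
    (h : ∀ z : Fin 3 → ℂ, (g (pr6 z)) 2 = QuotientAddGroup.mk (-(starRingEnd ℂ) (z 2) + c))
    (p : T6) : g p ≠ p := by
  intro hfix
  obtain ⟨z, hz⟩ : ∃ z : Fin 3 → ℂ, pr6 z = p := by
    have := fun i => Quotient.exists_rep (p i)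
    choose z hz using this
    exact ⟨z, funext fun i => hz i⟩
  have h2 : (QuotientAddGroup.mk (-(starRingEnd ℂ) (z 2) + c) : CTorus)
      = QuotientAddGroup.mk (z 2) := by
    rw [← h z, hz, hfix, ← hz]; rfl
  rw [QuotientAddGroup.eq] at h2
  obtain ⟨m, hm⟩ := im_int_of_mem_GammaLat h2
  simp [Complex.add_im, Complex.neg_im, Complex.conj_im, hc] at hm
  have h3 : ((2 * m : ℤ) : ℝ) = ((-1 : ℤ) : ℝ) := by push_cast; linarith
  have := Int.cast_injective h3
  omega

/-- The maps g₁[z] = [iz̄₁, iz̄₂, -z̄₃ + i/2] and g₂[z] = [-iz̄₁, -iz̄₂, -z̄₃ + (1+i)/2]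
have no fixed points on T⁶ (their action on the imaginary part of the third coordinate
is y₃ ↦ y₃ + 1/2). -/
theorem stmt3 (g₁ g₂ : T6 → T6)
    (h₁ : ∀ z : Fin 3 → ℂ, g₁ (pr6 z) = pr6 (g1C z))
    (h₂ : ∀ z : Fin 3 → ℂ, g₂ (pr6 z) = pr6 (g2C z)) :
    (∀ p : T6, g₁ p ≠ p) ∧ (∀ p : T6, g₂ p ≠ p) := by
  constructor
  · refine fun p => no_fix g₁ (Complex.I / 2) (by simp) (fun z => ?_) p
    rw [h₁ z]
    simp [pr6, g1C]
  · refine fun p => no_fix g₂ ((1 + Complex.I) / 2) (by simp) (fun z => ?_) p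
    rw [h₂ z]
    simp [pr6, g2C]
end
end

section
/- Let f[z] = [iz₁,iz₂,-z₃] act on T^6 = (ℂ/(ℤ+ℤi))³. The subspace of H^2(T^6, ℝ) fixed by f* is 5-dimensional, spanned by i dz₁∧dz̄₁, i dz₂∧dz̄₂, i dz₃∧dz̄₃, dz₁∧dz̄₂ + dz̄₁∧dz₂, and i(dz₁∧dz̄₂ - dz̄₁∧dz₂). -/
noncomputable section

open Complex

/-- A real translation-invariant 2-form on T⁶ = alternating ℝ-bilinear map ℂ³ × ℂ³ → ℝ. -/
def IsAlt2Form (ω : (Fin 3 → ℂ) → (Fin 3 → ℂ) → ℝ) : Prop :=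
  (∀ u v w, ω (u + v) w = ω u w + ω v w) ∧
  (∀ (r : ℝ) (v w), ω (r • v) w = r * ω v w) ∧
  (∀ u v w, ω u (v + w) = ω u v + ω u w) ∧
  (∀ (r : ℝ) (v w), ω v (r • w) = r * ω v w) ∧
  (∀ v w, ω v w = -ω w v)

/-- i dz_k ∧ dz̄_k. -/
def om (k : Fin 3) : (Fin 3 → ℂ) → (Fin 3 → ℂ) → ℝ := fun v w =>
  (Complex.I * (v k * (starRingEnd ℂ) (w k) - w k * (starRingEnd ℂ) (v k))).re

/-- dz₁ ∧ dz̄₂ + dz̄₁ ∧ dz₂. -/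
def om4 : (Fin 3 → ℂ) → (Fin 3 → ℂ) → ℝ := fun v w =>
  ((v 0 * (starRingEnd ℂ) (w 1) - w 0 * (starRingEnd ℂ) (v 1)) +
   ((starRingEnd ℂ) (v 0) * w 1 - (starRingEnd ℂ) (w 0) * v 1)).re

/-- i(dz₁ ∧ dz̄₂ - dz̄₁ ∧ dz₂). -/
def om5 : (Fin 3 → ℂ) → (Fin 3 → ℂ) → ℝ := fun v w =>
  (Complex.I * ((v 0 * (starRingEnd ℂ) (w 1) - w 0 * (starRingEnd ℂ) (v 1)) -
   ((starRingEnd ℂ) (v 0) * w 1 - (starRingEnd ℂ) (w 0) * v 1))).re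

-- explicit real coordinate formulas
lemma om_eval (k : Fin 3) (v w : Fin 3 → ℂ) :
    om k v w = 2 * ((v k).re * (w k).im - (v k).im * (w k).re) := by
  simp [om, Complex.mul_re, Complex.mul_im]; ring

lemma om4_eval (v w : Fin 3 → ℂ) :
    om4 v w = 2 * ((v 0).re * (w 1).re + (v 0).im * (w 1).im
      - (w 0).re * (v 1).re - (w 0).im * (v 1).im) := by
  simp [om4, Complex.mul_re, Complex.mul_im]; ring

lemma om5_eval (v w : Fin 3 → ℂ) :
    om5 v w = 2 * ((v 0).re * (w 1).im - (v 0).im * (w 1).re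
      - (w 0).re * (v 1).im + (w 0).im * (v 1).re) := by
  simp [om5, Complex.mul_re, Complex.mul_im]; ring

lemma fC_eval (z : Fin 3 → ℂ) : (fC z 0 = Complex.I * z 0) ∧ (fC z 1 = Complex.I * z 1) ∧ (fC z 2 = -(z 2)) := by
  refine ⟨rfl, rfl, rfl⟩

lemma smul_coord (r : ℝ) (v : Fin 3 → ℂ) (k : Fin 3) :
    ((r • v) k).re = r * (v k).re ∧ ((r • v) k).im = r * (v k).im := by
  simp [Pi.smul_apply, Complex.real_smul, Complex.mul_re, Complex.mul_im]

lemma om_alt (k : Fin 3) : IsAlt2Form (om k) := by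
  refine ⟨?_, ?_, ?_, ?_, ?_⟩ <;> intros <;>
    simp only [om_eval, Pi.add_apply, Pi.smul_apply, Complex.add_re, Complex.add_im,
      Complex.real_smul, Complex.mul_re, Complex.mul_im, Complex.ofReal_re, Complex.ofReal_im] <;> ring

lemma om4_alt : IsAlt2Form om4 := by
  refine ⟨?_, ?_, ?_, ?_, ?_⟩ <;> intros <;>
    simp only [om4_eval, Pi.add_apply, Pi.smul_apply, Complex.add_re, Complex.add_im,
      Complex.real_smul, Complex.mul_re, Complex.mul_im, Complex.ofReal_re, Complex.ofReal_im] <;> ring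

lemma om5_alt : IsAlt2Form om5 := by
  refine ⟨?_, ?_, ?_, ?_, ?_⟩ <;> intros <;>
    simp only [om5_eval, Pi.add_apply, Pi.smul_apply, Complex.add_re, Complex.add_im,
      Complex.real_smul, Complex.mul_re, Complex.mul_im, Complex.ofReal_re, Complex.ofReal_im] <;> ring

lemma fC0 (z : Fin 3 → ℂ) : fC z 0 = Complex.I * z 0 := rfl
lemma fC1 (z : Fin 3 → ℂ) : fC z 1 = Complex.I * z 1 := rfl
lemma fC2 (z : Fin 3 → ℂ) : fC z 2 = -(z 2) := rfl

lemma om_inv0 (v w : Fin 3 → ℂ) : om 0 (fC v) (fC w) = om 0 v w := by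
  simp only [om_eval, fC0, Complex.mul_re, Complex.mul_im, Complex.I_re, Complex.I_im]; ring
lemma om_inv1 (v w : Fin 3 → ℂ) : om 1 (fC v) (fC w) = om 1 v w := by
  simp only [om_eval, fC1, Complex.mul_re, Complex.mul_im, Complex.I_re, Complex.I_im]; ring
lemma om_inv2 (v w : Fin 3 → ℂ) : om 2 (fC v) (fC w) = om 2 v w := by
  simp only [om_eval, fC2, Complex.neg_re, Complex.neg_im]; ring
lemma om_inv (k : Fin 3) (v w : Fin 3 → ℂ) : om k (fC v) (fC w) = om k v w := by
  fin_cases k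
  · exact om_inv0 v w
  · exact om_inv1 v w
  · exact om_inv2 v w

lemma om4_inv (v w : Fin 3 → ℂ) : om4 (fC v) (fC w) = om4 v w := by
  simp only [om4_eval, fC0, fC1, Complex.mul_re, Complex.mul_im, Complex.I_re, Complex.I_im]; ring

lemma om5_inv (v w : Fin 3 → ℂ) : om5 (fC v) (fC w) = om5 v w := by
  simp only [om5_eval, fC0, fC1, Complex.mul_re, Complex.mul_im, Complex.I_re, Complex.I_im]; ring

def E0 : Fin 3 → ℂ := ![1, 0, 0]
def F0 : Fin 3 → ℂ := ![Complex.I, 0, 0]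
def E1 : Fin 3 → ℂ := ![0, 1, 0]
def F1 : Fin 3 → ℂ := ![0, Complex.I, 0]
def E2 : Fin 3 → ℂ := ![0, 0, 1]
def F2 : Fin 3 → ℂ := ![0, 0, Complex.I]

lemma decomp (v : Fin 3 → ℂ) :
    v = (v 0).re • E0 + (v 0).im • F0 + (v 1).re • E1 + (v 1).im • F1
        + (v 2).re • E2 + (v 2).im • F2 := by
  funext j
  fin_cases j <;>
    simp [E0, F0, E1, F1, E2, F2, Complex.real_smul]

lemma fC_E0 : fC E0 = F0 := by funext j; fin_cases j <;> simp [fC, E0, F0]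
lemma fC_F0 : fC F0 = -E0 := by
  funext j; fin_cases j <;> simp [fC, E0, F0, Complex.I_mul_I]
lemma fC_E1 : fC E1 = F1 := by funext j; fin_cases j <;> simp [fC, E1, F1]
lemma fC_F1 : fC F1 = -E1 := by
  funext j; fin_cases j <;> simp [fC, E1, F1, Complex.I_mul_I]
lemma fC_E2 : fC E2 = -E2 := by funext j; fin_cases j <;> simp [fC, E2]
lemma fC_F2 : fC F2 = -F2 := by funext j; fin_cases j <;> simp [fC, F2]

lemma key (ω : (Fin 3 → ℂ) → (Fin 3 → ℂ) → ℝ) (h : IsAlt2Form ω)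
    (hinv : ∀ v w, ω (fC v) (fC w) = ω v w) :
    ω = (ω E0 F0 / 2) • om 0 + (ω E1 F1 / 2) • om 1 + (ω E2 F2 / 2) • om 2
      + (ω E0 E1 / 2) • om4 + (ω E0 F1 / 2) • om5 := by
  obtain ⟨h1, h2, h3, h4, h5⟩ := h
  have hneg1 : ∀ v w, ω (-v) w = -ω v w := by
    intro v w; have := h2 (-1) v w; simpa using this
  have hneg2 : ∀ v w, ω v (-w) = -ω v w := by
    intro v w; have := h4 (-1) v w; simpa using this
  have hvv : ∀ v, ω v v = 0 := by
    intro v; have := h5 v v; linarith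
  -- zero relations
  have hz : ∀ X Y : Fin 3 → ℂ, fC X = Y → fC Y = -X → (∀ Z, fC Z = -Z → ω X Z = 0 ∧ ω Y Z = 0) := by
    intro X Y hXY hYX Z hZ
    have a := hinv X Z; rw [hXY, hZ, hneg2] at a
    have b := hinv Y Z; rw [hYX, hZ, hneg1, hneg2, neg_neg] at b
    constructor <;> linarith
  have z1 := hz E0 F0 fC_E0 fC_F0 E2 fC_E2
  have z2 := hz E0 F0 fC_E0 fC_F0 F2 fC_F2
  have z3 := hz E1 F1 fC_E1 fC_F1 E2 fC_E2
  have z4 := hz E1 F1 fC_E1 fC_F1 F2 fC_F2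
  -- relations between 01-block entries
  have hA : ω F0 F1 = ω E0 E1 := by
    have := hinv E0 E1; rw [fC_E0, fC_E1] at this; exact this
  have hB : ω F0 E1 = -ω E0 F1 := by
    have := hinv E0 F1; rw [fC_E0, fC_F1, hneg2] at this; linarith
  -- skew-orientation lemmas
  have s01 := h5 F0 E0
  have s23 := h5 F1 E1
  have s45 := h5 F2 E2
  have s02 := h5 E1 E0
  have s03 := h5 F1 E0
  have s12 := h5 E1 F0
  have s13 := h5 F1 F0
  have s04 := h5 E2 E0
  have s05 := h5 F2 E0
  have s14 := h5 E2 F0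
  have s15 := h5 F2 F0
  have s24 := h5 E2 E1
  have s25 := h5 F2 E1
  have s34 := h5 E2 F1
  have s35 := h5 F2 F1
  funext v w
  conv_lhs => rw [decomp v]; rw [decomp w]
  simp only [h1, h3, h2, h4]
  rw [s01, s23, s45, s02, s03, s12, s13, s04, s05, s14, s15, s24, s25, s34, s35,
    hA, hB, z1.1, z1.2, z2.1, z2.2, z3.1, z3.2, z4.1, z4.2]
  simp only [hvv, Pi.add_apply, Pi.smul_apply, smul_eq_mul, om_eval, om4_eval, om5_eval,
    E0, F0, E1, F1, E2, F2, Matrix.cons_val_zero, Matrix.cons_val_one, Matrix.head_cons,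
    Complex.one_re, Complex.one_im, Complex.I_re, Complex.I_im, Complex.zero_re, Complex.zero_im]
  ring

lemma P_closed : ∀ ω ∈ Submodule.span ℝ ({om 0, om 1, om 2, om4, om5} :
    Set ((Fin 3 → ℂ) → (Fin 3 → ℂ) → ℝ)),
    IsAlt2Form ω ∧ ∀ v w, ω (fC v) (fC w) = ω v w := by
  intro ω hω
  induction hω using Submodule.span_induction with
  | mem x hx =>
    simp only [Set.mem_insert_iff, Set.mem_singleton_iff] at hx
    rcases hx with rfl | rfl | rfl | rfl | rfl
    exacts [⟨om_alt 0, om_inv 0⟩, ⟨om_alt 1, om_inv 1⟩, ⟨om_alt 2, om_inv 2⟩,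
      ⟨om4_alt, om4_inv⟩, ⟨om5_alt, om5_inv⟩]
  | zero => exact ⟨⟨by simp, by simp, by simp, by simp, by simp⟩, by simp⟩
  | add x y hx hy px py =>
    obtain ⟨⟨a1,a2,a3,a4,a5⟩, ai⟩ := px
    obtain ⟨⟨b1,b2,b3,b4,b5⟩, bi⟩ := py
    refine ⟨⟨?_,?_,?_,?_,?_⟩,?_⟩ <;> intros <;>
      simp only [Pi.add_apply, a1, a2, a3, a4, b1, b2, b3, b4, ai, bi] <;> ring_nf
    · rw [a5, b5]; ring
  | smul r x hx px =>
    obtain ⟨⟨a1,a2,a3,a4,a5⟩, ai⟩ := px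
    refine ⟨⟨?_,?_,?_,?_,?_⟩,?_⟩ <;> intros <;>
      simp only [Pi.smul_apply, smul_eq_mul, a1, a2, a3, a4, ai] <;> ring_nf
    · rw [a5]; ring


/-- The subspace of H²(T⁶,ℝ) fixed by f* is 5-dimensional, spanned by
i dz₁∧dz̄₁, i dz₂∧dz̄₂, i dz₃∧dz̄₃, dz₁∧dz̄₂ + dz̄₁∧dz₂ and i(dz₁∧dz̄₂ - dz̄₁∧dz₂). -/
theorem stmt7 :
    ({ω : (Fin 3 → ℂ) → (Fin 3 → ℂ) → ℝ |
        IsAlt2Form ω ∧ ∀ v w, ω (fC v) (fC w) = ω v w} =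
      ↑(Submodule.span ℝ ({om 0, om 1, om 2, om4, om5} :
          Set ((Fin 3 → ℂ) → (Fin 3 → ℂ) → ℝ)))) ∧
    LinearIndependent ℝ ![om 0, om 1, om 2, om4, om5] := by
  constructor
  · ext ω
    constructor
    · rintro ⟨h, hinv⟩
      rw [key ω h hinv]
      have m0 : om 0 ∈ ({om 0, om 1, om 2, om4, om5} :
          Set ((Fin 3 → ℂ) → (Fin 3 → ℂ) → ℝ)) := by simp
      have m1 : om 1 ∈ ({om 0, om 1, om 2, om4, om5} :
          Set ((Fin 3 → ℂ) → (Fin 3 → ℂ) → ℝ)) := by simp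
      have m2 : om 2 ∈ ({om 0, om 1, om 2, om4, om5} :
          Set ((Fin 3 → ℂ) → (Fin 3 → ℂ) → ℝ)) := by simp
      have m4 : om4 ∈ ({om 0, om 1, om 2, om4, om5} :
          Set ((Fin 3 → ℂ) → (Fin 3 → ℂ) → ℝ)) := by simp
      have m5 : om5 ∈ ({om 0, om 1, om 2, om4, om5} :
          Set ((Fin 3 → ℂ) → (Fin 3 → ℂ) → ℝ)) := by simp
      exact Submodule.add_mem _ (Submodule.add_mem _ (Submodule.add_mem _
        (Submodule.add_mem _
          (Submodule.smul_mem _ _ (Submodule.subset_span m0))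
          (Submodule.smul_mem _ _ (Submodule.subset_span m1)))
        (Submodule.smul_mem _ _ (Submodule.subset_span m2)))
        (Submodule.smul_mem _ _ (Submodule.subset_span m4)))
        (Submodule.smul_mem _ _ (Submodule.subset_span m5))
    · exact P_closed ω
  · rw [Fintype.linearIndependent_iff]
    intro g hg
    simp only [Fin.sum_univ_five, Matrix.cons_val_zero, Matrix.cons_val_one, Matrix.head_cons,
      Matrix.cons_val_two, Matrix.tail_cons, Matrix.cons_val_three, Matrix.cons_val_four] at hg
    have e0 := congrFun (congrFun hg E0) F0
    have e1 := congrFun (congrFun hg E1) F1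
    have e2 := congrFun (congrFun hg E2) F2
    have e3 := congrFun (congrFun hg E0) E1
    have e4 := congrFun (congrFun hg E0) F1
    simp only [Pi.add_apply, Pi.smul_apply, smul_eq_mul, Pi.zero_apply,
      om_eval, om4_eval, om5_eval, E0, F0, E1, F1, E2, F2,
      Matrix.cons_val_zero, Matrix.cons_val_one, Matrix.head_cons,
      Matrix.cons_val_two, Matrix.tail_cons,
      Complex.one_re, Complex.one_im, Complex.I_re, Complex.I_im,
      Complex.zero_re, Complex.zero_im] at e0 e1 e2 e3 e4
    intro i
    fin_cases i <;> simp <;> linarith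
end
end

section
/- Let f[z] = [iz₁,iz₂,-z₃] act on T^6 = (ℂ/(ℤ+ℤi))³. The f*-invariant subspace of H^3(T^6, ℝ) is 4-dimensional, spanned by dz₁₂₃ + dz̄₁̄₂̄₃, i(dz₁₂₃ - dz̄₁̄₂̄₃), dz₁₂₃̄ + dz̄₁̄₂₃, and i(dz₁₂₃̄ - dz̄₁̄₂₃), where dz₁₂₃ = dz₁∧dz₂∧dz₃ and dz₁₂₃̄ = dz₁∧dz₂∧dz̄₃. -/
noncomputable section

open Complex

/-- A real translation-invariant 3-form on T⁶ = alternating ℝ-trilinear map on ℂ³. -/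
def IsAlt3Form (θ : (Fin 3 → ℂ) → (Fin 3 → ℂ) → (Fin 3 → ℂ) → ℝ) : Prop :=
  (∀ u u' v w, θ (u + u') v w = θ u v w + θ u' v w) ∧
  (∀ (r : ℝ) (u v w), θ (r • u) v w = r * θ u v w) ∧
  (∀ u v v' w, θ u (v + v') w = θ u v w + θ u v' w) ∧
  (∀ (r : ℝ) (u v w), θ u (r • v) w = r * θ u v w) ∧
  (∀ u v w w', θ u v (w + w') = θ u v w + θ u v w') ∧
  (∀ (r : ℝ) (u v w), θ u v (r • w) = r * θ u v w) ∧
  (∀ u v w, θ u v w = -θ v u w) ∧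
  (∀ u v w, θ u v w = -θ u w v)

/-- dz₁∧dz₂∧dz₃ (evaluated as a determinant). -/
def Th : (Fin 3 → ℂ) → (Fin 3 → ℂ) → (Fin 3 → ℂ) → ℂ :=
  fun u v w => Matrix.det (Matrix.of ![u, v, w])

/-- dz₁∧dz₂∧dz̄₃: conjugate the third coordinate. -/
def Th' : (Fin 3 → ℂ) → (Fin 3 → ℂ) → (Fin 3 → ℂ) → ℂ :=
  fun u v w => Matrix.det (Matrix.of
    ![![u 0, u 1, (starRingEnd ℂ) (u 2)],
      ![v 0, v 1, (starRingEnd ℂ) (v 2)],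
      ![w 0, w 1, (starRingEnd ℂ) (w 2)]])

/-- dz₁₂₃ + dz̄₁̄₂̄₃. -/
def th1 : (Fin 3 → ℂ) → (Fin 3 → ℂ) → (Fin 3 → ℂ) → ℝ := fun u v w =>
  (Th u v w + (starRingEnd ℂ) (Th u v w)).re

/-- i(dz₁₂₃ - dz̄₁̄₂̄₃). -/
def th2 : (Fin 3 → ℂ) → (Fin 3 → ℂ) → (Fin 3 → ℂ) → ℝ := fun u v w =>
  (Complex.I * (Th u v w - (starRingEnd ℂ) (Th u v w))).re

/-- dz₁₂₃̄ + dz̄₁̄₂₃. -/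
def th3 : (Fin 3 → ℂ) → (Fin 3 → ℂ) → (Fin 3 → ℂ) → ℝ := fun u v w =>
  (Th' u v w + (starRingEnd ℂ) (Th' u v w)).re

/-- i(dz₁₂₃̄ - dz̄₁̄₂₃). -/
def th4 : (Fin 3 → ℂ) → (Fin 3 → ℂ) → (Fin 3 → ℂ) → ℝ := fun u v w =>
  (Complex.I * (Th' u v w - (starRingEnd ℂ) (Th' u v w))).re

/-!
A real alternating 3-form on ℂ³ is determined by its values on increasing triples from the real
basis `1, i` of the three coordinate lines. The map `f` rotates the first two lines by a right
angle and negates the third, so `f²` is `-1` on the first two lines: invariance under `f²` kills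
every basis triple with an odd number of vectors from the first two lines, and invariance under
`f` relates the remaining ones to the four triples `(e₁, e₂ or ie₂, e₃ or ie₃)`. Evaluation on
these four triples is therefore injective on invariant forms, and the real and imaginary parts
of `dz₁₂₃` and `dz₁₂₃̄`, which are invariant because `f` acts with determinant `i · i · (-1) = 1`,
take linearly independent values there.
-/

open ComplexConjugate

local notation "ℂ³" => Fin 3 → ℂ

theorem Module.Basis.ext_alternating_of_strictMono {R M N ι : Type*} [CommRing R]
    [AddCommGroup M] [Module R M] [AddCommGroup N] [Module R N] [LinearOrder ι] {n : ℕ}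
    {f g : M [⋀^Fin n]→ₗ[R] N} (e : Module.Basis ι R M)
    (h : ∀ v : Fin n → ι, StrictMono v → f (fun i => e (v i)) = g (fun i => e (v i))) :
    f = g := by
  refine e.ext_alternating fun v hv => ?_
  have hsorted : StrictMono (v ∘ Tuple.sort v) :=
    (Tuple.monotone_sort v).strictMono_of_injective (hv.comp (Equiv.injective _))
  rw [f.map_congr_perm _ (Tuple.sort v), g.map_congr_perm _ (Tuple.sort v)]
  exact congrArg _ (h _ hsorted)

namespace IsAlt3Form

variable {θ : ℂ³ → ℂ³ → ℂ³ → ℝ}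

lemma apply_self_left (h : IsAlt3Form θ) (u w : ℂ³) : θ u u w = 0 := by
  linarith [h.2.2.2.2.2.2.1 u u w]

lemma apply_self_right (h : IsAlt3Form θ) (u v : ℂ³) : θ u v v = 0 := by
  linarith [h.2.2.2.2.2.2.2 u v v]

lemma apply_self_outer (h : IsAlt3Form θ) (u v : ℂ³) : θ u v u = 0 := by
  rw [h.2.2.2.2.2.2.2, h.apply_self_left, neg_zero]

def toAlternatingMap (h : IsAlt3Form θ) : ℂ³ [⋀^Fin 3]→ₗ[ℝ] ℝ where
  toFun v := θ (v 0) (v 1) (v 2)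
  map_update_add' v i x y := by
    -- with an arbitrary `DecidableEq` instance, `simp` produces a proof the kernel rejects
    obtain rfl : ‹DecidableEq (Fin 3)› = instDecidableEqFin 3 := Subsingleton.elim _ _
    obtain ⟨h₁, -, h₂, -, h₃, -⟩ := h
    fin_cases i <;> simp [h₁, h₂, h₃]
  map_update_smul' v i r x := by
    obtain rfl : ‹DecidableEq (Fin 3)› = instDecidableEqFin 3 := Subsingleton.elim _ _
    obtain ⟨-, h₁, -, h₂, -, h₃, -⟩ := h
    fin_cases i <;> simp [h₁, h₂, h₃]
  map_eq_zero_of_eq' v i j hv hij := by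
    fin_cases i <;> fin_cases j <;>
      simp_all [h.apply_self_left, h.apply_self_right, h.apply_self_outer]

lemma of_alternatingMap (A : ℂ³ [⋀^Fin 3]→ₗ[ℝ] ℝ) : IsAlt3Form fun u v w => A ![u, v, w] := by
  have upd₁ : ∀ u v w x : ℂ³, Function.update ![u, v, w] 1 x = ![u, x, w] := by
    intro u v w x; funext k; fin_cases k <;> rfl
  have upd₂ : ∀ u v w x : ℂ³, Function.update ![u, v, w] 2 x = ![u, v, x] := by
    intro u v w x; funext k; fin_cases k <;> rfl
  have swap₁ : ∀ u v w : ℂ³, ![u, v, w] ∘ Equiv.swap 0 1 = ![v, u, w] := by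
    intro u v w; funext k; fin_cases k <;> rfl
  have swap₂ : ∀ u v w : ℂ³, ![u, v, w] ∘ Equiv.swap 1 2 = ![u, w, v] := by
    intro u v w; funext k; fin_cases k <;> rfl
  refine ⟨fun u u' v w => A.map_vecCons_add _ u u', fun r u v w => A.map_vecCons_smul _ r u,
    fun u v v' w => ?_, fun r u v w => ?_, fun u v w w' => ?_, fun r u v w => ?_,
    fun u v w => ?_, fun u v w => ?_⟩
  · simpa [upd₁] using A.map_update_add ![u, v, w] 1 v v'
  · simpa [upd₁] using A.map_update_smul ![u, v, w] 1 r v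
  · simpa [upd₂] using A.map_update_add ![u, v, w] 2 w w'
  · simpa [upd₂] using A.map_update_smul ![u, v, w] 2 r w
  · show A _ = -A _
    rw [← swap₁, A.map_swap _ (by decide)]
  · show A _ = -A _
    rw [← swap₂, A.map_swap _ (by decide)]

end IsAlt3Form

def invariantForms : Submodule ℝ (ℂ³ → ℂ³ → ℂ³ → ℝ) where
  carrier := {θ | IsAlt3Form θ ∧ ∀ u v w, θ (fC u) (fC v) (fC w) = θ u v w}
  add_mem' := fun ⟨h₁, hf₁⟩ ⟨h₂, hf₂⟩ =>
    ⟨.of_alternatingMap (h₁.toAlternatingMap + h₂.toAlternatingMap),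
      fun u v w => by simp [hf₁, hf₂]⟩
  zero_mem' := ⟨.of_alternatingMap 0, fun _ _ _ => rfl⟩
  smul_mem' c _ := fun ⟨h, hf⟩ =>
    ⟨.of_alternatingMap (c • h.toAlternatingMap), fun u v w => by simp [hf]⟩

def realCoords : ℂ³ ≃ₗ[ℝ] (Fin 6 → ℝ) where
  toFun u := ![(u 0).re, (u 0).im, (u 1).re, (u 1).im, (u 2).re, (u 2).im]
  invFun x := ![⟨x 0, x 1⟩, ⟨x 2, x 3⟩, ⟨x 4, x 5⟩]
  map_add' u v := by ext i; fin_cases i <;> simp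
  map_smul' r u := by ext i; fin_cases i <;> simp
  left_inv u := by ext i; fin_cases i <;> simp
  right_inv x := by ext i; fin_cases i <;> rfl

def realBasis : Module.Basis (Fin 6) ℝ ℂ³ := .ofEquivFun realCoords

lemma coe_realBasis :
    ⇑realBasis = ![![1, 0, 0], ![I, 0, 0], ![0, 1, 0], ![0, I, 0], ![0, 0, 1], ![0, 0, I]] := by
  ext j i
  fin_cases j <;> fin_cases i <;> simp [realBasis, realCoords, Complex.ext_iff]

def fPerm : Fin 6 → Fin 6 := ![1, 0, 3, 2, 4, 5]

def fSign : Fin 6 → ℝ := ![1, -1, 1, -1, -1, -1]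

lemma fC_realBasis (j : Fin 6) : fC (realBasis j) = fSign j • realBasis (fPerm j) := by
  ext i
  fin_cases j <;> fin_cases i <;> simp [coe_realBasis, fC, fSign, fPerm]

lemma eq_zero_of_invariant_of_lt (c : Fin 6 → Fin 6 → Fin 6 → ℝ)
    (hswap : ∀ j k l, c k j l = -c j k l)
    (hf : ∀ j k l, c j k l = fSign j * fSign k * fSign l * c (fPerm j) (fPerm k) (fPerm l))
    (h024 : c 0 2 4 = 0) (h025 : c 0 2 5 = 0) (h034 : c 0 3 4 = 0) (h035 : c 0 3 5 = 0)
    {j k l : Fin 6} (hjk : j < k) (hkl : k < l) : c j k l = 0 := by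
  have h₁ := hf j k l
  have h₂ := hf (fPerm j) (fPerm k) (fPerm l)
  have h₃ := hswap j k l
  clear hf hswap
  -- Since `fPerm` is an involution, `h₁` and `h₂` give `c j k l = -c j k l` when an odd number of
  -- the indices is below `4`; otherwise `h₁` relates `c j k l` to one of the four given values
  -- or, through `h₃`, to `-c j k l`.
  fin_cases j <;> fin_cases k <;> fin_cases l
  all_goals first
    | exact absurd hjk (by decide)
    | exact absurd hkl (by decide)
    | (simp [fPerm, fSign] at h₁ h₂ h₃ ⊢; linarith)

lemma eq_zero_of_fC_invariant (A : ℂ³ [⋀^Fin 3]→ₗ[ℝ] ℝ)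
    (hA : ∀ v : Fin 3 → ℂ³, A (fun i => fC (v i)) = A v)
    (h024 : A ![realBasis 0, realBasis 2, realBasis 4] = 0)
    (h025 : A ![realBasis 0, realBasis 2, realBasis 5] = 0)
    (h034 : A ![realBasis 0, realBasis 3, realBasis 4] = 0)
    (h035 : A ![realBasis 0, realBasis 3, realBasis 5] = 0) : A = 0 := by
  have hswap : ∀ j k l, A ![realBasis k, realBasis j, realBasis l] =
      -A ![realBasis j, realBasis k, realBasis l] := fun j k l => by
    rw [← A.map_swap _ (i := 0) (j := 1) (by decide)]
    congr 1; funext i; fin_cases i <;> rfl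
  have hf : ∀ j k l, A ![realBasis j, realBasis k, realBasis l] = fSign j * fSign k * fSign l *
      A ![realBasis (fPerm j), realBasis (fPerm k), realBasis (fPerm l)] := fun j k l => by
    have h := hA ![realBasis j, realBasis k, realBasis l]
    have hsmul := A.map_smul_univ ![fSign j, fSign k, fSign l]
      ![realBasis (fPerm j), realBasis (fPerm k), realBasis (fPerm l)]
    have hv : (fun i => fC (![realBasis j, realBasis k, realBasis l] i)) =
        fun i => ![fSign j, fSign k, fSign l] i •
          ![realBasis (fPerm j), realBasis (fPerm k), realBasis (fPerm l)] i := by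
      funext i; fin_cases i <;> simp [fC_realBasis]
    rw [hv, hsmul, Fin.prod_univ_three, smul_eq_mul] at h
    exact h.symm
  refine realBasis.ext_alternating_of_strictMono fun v hv => ?_
  have hv' : (fun i => realBasis (v i)) = ![realBasis (v 0), realBasis (v 1), realBasis (v 2)] :=
    by funext i; fin_cases i <;> rfl
  rw [hv', AlternatingMap.zero_apply]
  exact eq_zero_of_invariant_of_lt (fun j k l => A ![realBasis j, realBasis k, realBasis l])
    hswap hf h024 h025 h034 h035 (hv (by decide)) (hv (by decide))

def detReal : ℂ³ [⋀^Fin 3]→ₗ[ℝ] ℂ :=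
  { (Matrix.detRowAlternating : ℂ³ [⋀^Fin 3]→ₗ[ℂ] ℂ).toMultilinearMap.restrictScalars ℝ with
    map_eq_zero_of_eq' := fun v _ _ h hij =>
      (Matrix.detRowAlternating (n := Fin 3) (R := ℂ)).map_eq_zero_of_eq v h hij }

def conjThird : ℂ³ →ₗ[ℝ] ℂ³ where
  toFun u := ![u 0, u 1, conj (u 2)]
  map_add' u v := by ext i; fin_cases i <;> simp
  map_smul' r u := by ext i; fin_cases i <;> simp

lemma Th_eq_detReal (u v w : ℂ³) : Th u v w = detReal ![u, v, w] := by rfl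

lemma Th'_eq_detReal (u v w : ℂ³) :
    Th' u v w = detReal.compLinearMap conjThird ![u, v, w] := by rfl

lemma Th'_eq_Th (u v w : ℂ³) : Th' u v w = Th (conjThird u) (conjThird v) (conjThird w) := by rfl

lemma Th_fC (u v w : ℂ³) : Th (fC u) (fC v) (fC w) = Th u v w := by
  have h : Matrix.of ![fC u, fC v, fC w] = Matrix.of ![u, v, w] * Matrix.diagonal ![I, I, -1] :=
    by ext i j; fin_cases i <;> fin_cases j <;> simp [fC, mul_comm]
  change Matrix.det _ = Matrix.det _
  rw [h, Matrix.det_mul, Matrix.det_diagonal, Fin.prod_univ_three]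
  simp

lemma conjThird_fC (u : ℂ³) : conjThird (fC u) = fC (conjThird u) := by
  ext i; fin_cases i <;> simp [conjThird, fC]

lemma Th'_fC (u v w : ℂ³) : Th' (fC u) (fC v) (fC w) = Th' u v w := by
  simp only [Th'_eq_Th, conjThird_fC, Th_fC]

lemma re_mul_mem_invariantForms {D : ℂ³ → ℂ³ → ℂ³ → ℂ} (A : ℂ³ [⋀^Fin 3]→ₗ[ℝ] ℂ)
    (hA : ∀ u v w, D u v w = A ![u, v, w]) (hD : ∀ u v w, D (fC u) (fC v) (fC w) = D u v w)
    (c : ℂ) : (fun u v w => (c * D u v w).re) ∈ invariantForms := by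
  refine ⟨?_, fun u v w => by simp only [hD]⟩
  simp only [hA]
  exact .of_alternatingMap ((Complex.reLm ∘ₗ LinearMap.mulLeft ℝ c).compAlternatingMap A)

lemma re_add_conj (z : ℂ) : (z + conj z).re = (2 * z).re := by simp; ring

lemma re_I_mul_sub_conj (z : ℂ) : (I * (z - conj z)).re = (2 * I * z).re := by simp; ring

lemma th1_mem_invariantForms : th1 ∈ invariantForms := by
  have h : th1 = fun u v w => (2 * Th u v w).re := by funext u v w; exact re_add_conj _
  exact h ▸ re_mul_mem_invariantForms detReal Th_eq_detReal Th_fC 2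

lemma th2_mem_invariantForms : th2 ∈ invariantForms := by
  have h : th2 = fun u v w => (2 * I * Th u v w).re := by
    funext u v w; exact re_I_mul_sub_conj _
  exact h ▸ re_mul_mem_invariantForms detReal Th_eq_detReal Th_fC (2 * I)

lemma th3_mem_invariantForms : th3 ∈ invariantForms := by
  have h : th3 = fun u v w => (2 * Th' u v w).re := by funext u v w; exact re_add_conj _
  exact h ▸ re_mul_mem_invariantForms _ Th'_eq_detReal Th'_fC 2

lemma th4_mem_invariantForms : th4 ∈ invariantForms := by
  have h : th4 = fun u v w => (2 * I * Th' u v w).re := by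
    funext u v w; exact re_I_mul_sub_conj _
  exact h ▸ re_mul_mem_invariantForms _ Th'_eq_detReal Th'_fC (2 * I)

lemma span_th_le_invariantForms :
    Submodule.span ℝ {th1, th2, th3, th4} ≤ invariantForms := by
  rw [Submodule.span_le]
  rintro θ (rfl | rfl | rfl | rfl)
  exacts [th1_mem_invariantForms, th2_mem_invariantForms, th3_mem_invariantForms,
    th4_mem_invariantForms]

def evalTriples : (ℂ³ → ℂ³ → ℂ³ → ℝ) →ₗ[ℝ] (Fin 4 → ℝ) where
  toFun θ := ![θ (realBasis 0) (realBasis 2) (realBasis 4),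
    θ (realBasis 0) (realBasis 2) (realBasis 5), θ (realBasis 0) (realBasis 3) (realBasis 4),
    θ (realBasis 0) (realBasis 3) (realBasis 5)]
  map_add' _ _ := by ext i; fin_cases i <;> rfl
  map_smul' _ _ := by ext i; fin_cases i <;> rfl

lemma eq_zero_of_mem_invariantForms {η : ℂ³ → ℂ³ → ℂ³ → ℝ} (hη : η ∈ invariantForms)
    (h : evalTriples η = 0) : η = 0 := by
  have hA := eq_zero_of_fC_invariant hη.1.toAlternatingMap (fun v => hη.2 _ _ _)
    (congr_fun h 0) (congr_fun h 1) (congr_fun h 2) (congr_fun h 3)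
  funext u v w
  exact congr($hA ![u, v, w])

lemma evalTriples_th1 : evalTriples th1 = ![2, 0, 0, -2] := by
  ext i
  fin_cases i <;> simp [evalTriples, th1, Th, coe_realBasis, Matrix.det_fin_three] <;> norm_num

lemma evalTriples_th2 : evalTriples th2 = ![0, -2, -2, 0] := by
  ext i
  fin_cases i <;> simp [evalTriples, th2, Th, coe_realBasis, Matrix.det_fin_three] <;> norm_num

lemma evalTriples_th3 : evalTriples th3 = ![2, 0, 0, 2] := by
  ext i
  fin_cases i <;> simp [evalTriples, th3, Th', coe_realBasis, Matrix.det_fin_three] <;> norm_num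

lemma evalTriples_th4 : evalTriples th4 = ![0, 2, -2, 0] := by
  ext i
  fin_cases i <;> simp [evalTriples, th4, Th', coe_realBasis, Matrix.det_fin_three] <;> norm_num

lemma mem_span_th_of_mem_invariantForms {θ : ℂ³ → ℂ³ → ℂ³ → ℝ} (hθ : θ ∈ invariantForms) :
    θ ∈ Submodule.span ℝ {th1, th2, th3, th4} := by
  set e := evalTriples θ with he
  set ψ := ((e 0 - e 3) / 4) • th1 + (-(e 1 + e 2) / 4) • th2 + ((e 0 + e 3) / 4) • th3 +
    ((e 1 - e 2) / 4) • th4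
  have hψ : ψ ∈ Submodule.span ℝ {th1, th2, th3, th4} := by
    refine add_mem (add_mem (add_mem ?_ ?_) ?_) ?_ <;>
      exact Submodule.smul_mem _ _ (Submodule.subset_span (by simp))
  have h : θ - ψ = 0 := by
    refine eq_zero_of_mem_invariantForms (sub_mem hθ (span_th_le_invariantForms hψ)) ?_
    simp only [ψ, map_sub, map_add, map_smul, evalTriples_th1, evalTriples_th2, evalTriples_th3,
      evalTriples_th4, ← he]
    ext i; fin_cases i <;> simp <;> ring
  rwa [sub_eq_zero.1 h]

lemma linearIndependent_th : LinearIndependent ℝ ![th1, th2, th3, th4] := by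
  refine LinearIndependent.of_comp evalTriples ?_
  have h : evalTriples ∘ ![th1, th2, th3, th4] =
      ![![2, 0, 0, -2], ![0, -2, -2, 0], ![2, 0, 0, 2], ![0, 2, -2, 0]] := by
    funext i; fin_cases i
    exacts [evalTriples_th1, evalTriples_th2, evalTriples_th3, evalTriples_th4]
  rw [h, Fintype.linearIndependent_iff]
  intro g hg
  have h₀ := congr_fun hg 0
  have h₁ := congr_fun hg 1
  have h₂ := congr_fun hg 2
  have h₃ := congr_fun hg 3
  simp [Fin.sum_univ_four] at h₀ h₁ h₂ h₃
  intro i; fin_cases i <;> simp <;> linarith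

/-- The f*-invariant subspace of H³(T⁶,ℝ) is 4-dimensional, spanned by
dz₁₂₃ + dz̄₁̄₂̄₃, i(dz₁₂₃ - dz̄₁̄₂̄₃), dz₁₂₃̄ + dz̄₁̄₂₃ and i(dz₁₂₃̄ - dz̄₁̄₂₃). -/
theorem stmt8 :
    ({θ : (Fin 3 → ℂ) → (Fin 3 → ℂ) → (Fin 3 → ℂ) → ℝ |
        IsAlt3Form θ ∧ ∀ u v w, θ (fC u) (fC v) (fC w) = θ u v w} =
      ↑(Submodule.span ℝ ({th1, th2, th3, th4} :
          Set ((Fin 3 → ℂ) → (Fin 3 → ℂ) → (Fin 3 → ℂ) → ℝ)))) ∧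
    LinearIndependent ℝ ![th1, th2, th3, th4] :=
  ⟨subset_antisymm (fun _ => mem_span_th_of_mem_invariantForms)
    (fun _ hθ => span_th_le_invariantForms hθ), linearIndependent_th⟩
end
end
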